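/- arXiv:2001.03125 — 5 statements merged into one kernel-verified Lean document; each statement's English description precedes it below -/
import Mathlib

section
/- Let g be a finite-dimensional real Lie algebra, let h, x ∈ g and let c ∈ ℝ with c ≠ 0. If ⁅h, x⁆ = c • x, then x is a nilpotent element of g, i.e. the adjoint endomorphism ad x : g → g, y ↦ ⁅x, y⁆, is a nilpotent linear map. -/
/-!
If `⁅a, n⁆ = c • n` in an associative algebra, then `⁅a, n ^ k⁆ = (k * c) • n ^ k`, so every
nonzero power of `n` is an eigenvector of `ad a` with eigenvalue `k * c`. In characteristic zero
these eigenvalues are pairwise distinct when `c ≠ 0`, while an endomorphism of a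
finite-dimensional space has only finitely many eigenvalues; hence some power of `n` vanishes.
Apply this in `Module.End ℝ g` to `a = ad h` and `n = ad x`.
-/

attribute [local instance] LieRing.ofAssociativeRing

theorem Ring.lie_mul_right {A : Type*} [Ring A] (a b c : A) :
    ⁅a, b * c⁆ = ⁅a, b⁆ * c + b * ⁅a, c⁆ := by
  simp only [Ring.lie_def]
  noncomm_ring

theorem lie_pow_of_lie_eq_smul {R A : Type*} [CommRing R] [Ring A] [Algebra R A]
    {a b : A} {c : R} (h : ⁅a, b⁆ = c • b) (k : ℕ) :
    ⁅a, b ^ k⁆ = ((k : R) * c) • b ^ k := by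
  induction k with
  | zero => simp [Ring.lie_def]
  | succ k ih =>
    rw [pow_succ, Ring.lie_mul_right, ih, h, smul_mul_assoc, mul_smul_comm, ← add_smul,
      Nat.cast_succ, add_one_mul]

theorem isNilpotent_of_lie_eq_smul {K A : Type*} [Field K] [CharZero K] [Ring A] [Algebra K A]
    [FiniteDimensional K A] {a n : A} {c : K} (hc : c ≠ 0) (h : ⁅a, n⁆ = c • n) :
    IsNilpotent n := by
  by_contra hn
  have hasEigenvalue (k : ℕ) : (LieAlgebra.ad K A a).HasEigenvalue (k * c) :=
    Module.End.hasEigenvalue_of_hasEigenvector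
      ⟨Module.End.mem_eigenspace_iff.2 (lie_pow_of_lie_eq_smul h k), fun h0 ↦ hn ⟨k, h0⟩⟩
  exact Set.infinite_of_injective_forall_mem (mul_left_injective₀ hc |>.comp Nat.cast_injective)
    hasEigenvalue (Module.End.finite_hasEigenvalue _)

/-- An eigenvector of some `ad h` with nonzero eigenvalue is a nilpotent element,
i.e. its adjoint endomorphism is nilpotent. -/
theorem eigenvector_of_ad_isNilpotent
    {g : Type*} [LieRing g] [LieAlgebra ℝ g] [Module.Finite ℝ g]
    (h x : g) (c : ℝ) (hc : c ≠ 0) (hx : ⁅h, x⁆ = c • x) :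
    IsNilpotent (LieAlgebra.ad ℝ g x) :=
  isNilpotent_of_lie_eq_smul (a := LieAlgebra.ad ℝ g h) hc <| by
    rw [← LieHom.map_lie, hx, map_smul]
end

section
/- Let g be a finite-dimensional semisimple real Lie algebra, let τ and θ be involutive Lie algebra automorphisms of g with τ ∘ θ = θ ∘ τ. Set h := {x ∈ g : τ(x) = x}, q := {x ∈ g : τ(x) = −x}, and p := {x ∈ g : θ(x) = −x}. Let a_h be a maximal abelian subspace of h ∩ p and let a be a maximal abelian subspace of p with a_h ⊆ a. Then a is invariant under τ (τ(a) = a) and a = a_h ⊕ (a ∩ q). -/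
/-- `s` is a maximal abelian subspace of the subspace `p` of the Lie algebra `g`. -/
def IsMaxAbelianIn {g : Type*} [LieRing g] [LieAlgebra ℝ g]
    (p s : Submodule ℝ g) : Prop :=
  s ≤ p ∧ (∀ x ∈ s, ∀ y ∈ s, ⁅x, y⁆ = 0) ∧
    ∀ t : Submodule ℝ g, t ≤ p → (∀ x ∈ t, ∀ y ∈ t, ⁅x, y⁆ = 0) → s ≤ t → t = s

/-- Lemma 3.3: if `τ, θ` are commuting involutive automorphisms of a finite-dimensional
semisimple real Lie algebra `g`, `a_h` is maximal abelian in `h ∩ p` and `a` is maximal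
abelian in `p` containing `a_h`, then `a` is `τ`-invariant and `a = a_h ⊕ (a ∩ q)`. -/
theorem maxAbelian_tau_invariant
    {g : Type*} [LieRing g] [LieAlgebra ℝ g] [Module.Finite ℝ g]
    [LieAlgebra.IsSemisimple ℝ g]
    (τ θ : g →ₗ[ℝ] g)
    (hτbr : ∀ x y : g, τ ⁅x, y⁆ = ⁅τ x, τ y⁆) (hτinv : ∀ x, τ (τ x) = x)
    (hθbr : ∀ x y : g, θ ⁅x, y⁆ = ⁅θ x, θ y⁆) (hθinv : ∀ x, θ (θ x) = x)
    (hcomm : ∀ x, τ (θ x) = θ (τ x))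
    (hfix q p : Submodule ℝ g)
    (hmemh : ∀ x, x ∈ hfix ↔ τ x = x)
    (hmemq : ∀ x, x ∈ q ↔ τ x = -x)
    (hmemp : ∀ x, x ∈ p ↔ θ x = -x)
    (ah a : Submodule ℝ g)
    (hah : IsMaxAbelianIn (hfix ⊓ p) ah)
    (ha : IsMaxAbelianIn p a) (hsub : ah ≤ a) :
    Submodule.map τ a = a ∧ a = ah ⊔ (a ⊓ q) ∧ Disjoint ah (a ⊓ q) := by
  obtain ⟨hahle, hahab, hahmax⟩ := hah
  obtain ⟨hale, haab, hamax⟩ := ha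
  -- Key: for x ∈ a, the symmetric part (x + τ x)/2 lies in ah.
  have key : ∀ x ∈ a, (2⁻¹ : ℝ) • (x + τ x) ∈ ah := by
    intro x hx
    set z := (2⁻¹ : ℝ) • (x + τ x) with hz
    have hzh : τ z = z := by
      rw [hz, map_smul, map_add, hτinv x, add_comm]
    have hxp : θ x = -x := (hmemp x).1 (hale hx)
    have hzp : θ z = -z := by
      rw [hz, map_smul, map_add, hxp, ← hcomm, hxp, map_neg, ← neg_add, smul_neg]
    have hzcomm : ∀ y ∈ ah, ⁅z, y⁆ = 0 := by
      intro y hy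
      have h1 : ⁅x, y⁆ = (0 : g) := haab x hx y (hsub hy)
      have hyfix : τ y = y := (hmemh y).1 ((hahle hy).1)
      have h2 : ⁅τ x, y⁆ = (0 : g) := by
        have := hτbr x y
        rw [h1, hyfix, map_zero] at this
        exact this.symm
      rw [hz, smul_lie, add_lie, h1, h2, add_zero, smul_zero]
    -- Consider ah ⊔ span {z}; it is abelian in hfix ⊓ p, hence equals ah.
    have hteq : ah ⊔ Submodule.span ℝ {z} = ah := by
      apply hahmax
      · refine sup_le hahle ?_
        rw [Submodule.span_le, Set.singleton_subset_iff]
        exact ⟨(hmemh z).2 hzh, (hmemp z).2 hzp⟩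
      · intro u hu v hv
        rw [Submodule.mem_sup] at hu hv
        obtain ⟨y1, hy1, z1, hz1, rfl⟩ := hu
        obtain ⟨y2, hy2, z2, hz2, rfl⟩ := hv
        rw [Submodule.mem_span_singleton] at hz1 hz2
        obtain ⟨c1, rfl⟩ := hz1
        obtain ⟨c2, rfl⟩ := hz2
        have hzy2 : ⁅z, y2⁆ = (0 : g) := hzcomm y2 hy2
        have hy1z : ⁅y1, z⁆ = (0 : g) := by
          have := hzcomm y1 hy1
          rw [← lie_skew, this, neg_zero]
        simp [add_lie, lie_add, lie_smul, smul_lie, hahab y1 hy1 y2 hy2, hzy2, hy1z]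
      · exact le_sup_left
    have : z ∈ ah ⊔ Submodule.span ℝ {z} :=
      Submodule.mem_sup_right (Submodule.mem_span_singleton_self z)
    rwa [hteq] at this
  -- τ-invariance of a
  have hτa : ∀ x ∈ a, τ x ∈ a := by
    intro x hx
    have hz := key x hx
    have : τ x = (2 : ℝ) • ((2⁻¹ : ℝ) • (x + τ x)) - x := by
      module
    rw [this]
    exact Submodule.sub_mem a (Submodule.smul_mem a 2 (hsub hz)) hx
  have hmapτ : Submodule.map τ a = a := by
    apply le_antisymm
    · rintro _ ⟨x, hx, rfl⟩
      exact hτa x hx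
    · intro x hx
      exact ⟨τ x, hτa x hx, hτinv x⟩
  refine ⟨hmapτ, ?_, ?_⟩
  · apply le_antisymm
    · intro x hx
      have hz := key x hx
      set z := (2⁻¹ : ℝ) • (x + τ x) with hzdef
      have hw : x - z ∈ a := Submodule.sub_mem a hx (hsub hz)
      have hwq : x - z ∈ q := by
        rw [hmemq, map_sub, hzdef, map_smul, map_add, hτinv x]
        module
      exact Submodule.mem_sup.2 ⟨z, hz, x - z, ⟨hw, hwq⟩, by abel⟩
    · exact sup_le hsub inf_le_left
  · rw [disjoint_iff]
    rw [Submodule.eq_bot_iff]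
    intro x hx
    have h1 : τ x = x := (hmemh x).1 (hahle hx.1).1
    have h2 : τ x = -x := (hmemq x).1 hx.2.2
    have hxeq : x = -x := h1.symm.trans h2
    have h2x : (2 : ℝ) • x = 0 := by
      rw [two_smul]
      nth_rewrite 1 [hxeq]
      exact neg_add_cancel x
    exact (smul_eq_zero.mp h2x).resolve_left (by norm_num)
end

section
/- Let g be a finite-dimensional real Lie algebra endowed with a norm, let τ be an involutive Lie algebra automorphism of g, let h ∈ g^τ, and let W ⊆ g be a pointed generating invariant closed convex cone. Then g_red(W,τ,h) := g_−(W,τ,h) + h_0(h) + g_+(W,τ,h) is a 3-graded Lie subalgebra of g; more precisely: (i) g_+(W,τ,h) and g_−(W,τ,h) are abelian, i.e. ⁅u,v⁆ = 0 for u, v ∈ g_+ and for u, v ∈ g_−; (ii) ⁅g_−(W,τ,h), g_+(W,τ,h)⁆ ⊆ h_0(h); and (iii) ⁅h_0(h), g_±(W,τ,h)⁆ ⊆ g_±(W,τ,h). -/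
open scoped Pointwise

/-- The bilinear map `B` is a Lie bracket on `g`. -/
def IsLieBracketOn {g : Type*} [AddCommGroup g] [Module ℝ g]
    (B : g →ₗ[ℝ] g →ₗ[ℝ] g) : Prop :=
  (∀ x : g, B x x = 0) ∧
    ∀ x y z : g, B x (B y z) = B (B x y) z + B y (B x z)

/-- `W` is an invariant closed convex cone of the (normed) Lie algebra `(g, B)`:
it is closed, convex, stable under nonnegative scalar multiplication, and invariant
under all operators `e^{ad x} = exp (B x)`. -/
def IsInvariantCone {g : Type*} [NormedAddCommGroup g] [NormedSpace ℝ g]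
    [FiniteDimensional ℝ g] (B : g →ₗ[ℝ] g →ₗ[ℝ] g) (W : Set g) : Prop :=
  IsClosed W ∧ Convex ℝ W ∧ (∀ c : ℝ, 0 ≤ c → ∀ w ∈ W, c • w ∈ W) ∧
    ∀ x : g, ∀ w ∈ W,
      NormedSpace.exp (LinearMap.toContinuousLinearMap (B x)) w ∈ W

/-- `q_{ε}(h) = {x ∈ q : ⁅h,x⁆ = ε x}` for the `(-1)`-eigenspace `q` of `τ`. -/
def qEigen {g : Type*} [NormedAddCommGroup g] [NormedSpace ℝ g] [FiniteDimensional ℝ g]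
    (B : g →ₗ[ℝ] g →ₗ[ℝ] g) (τ : g →ₗ[ℝ] g) (h : g) (ε : ℝ) : Set g :=
  {x : g | τ x = -x ∧ B h x = ε • x}

/-- `C₊(W,τ,h) = W ∩ q₁(h)`. -/
def conePlus {g : Type*} [NormedAddCommGroup g] [NormedSpace ℝ g] [FiniteDimensional ℝ g]
    (B : g →ₗ[ℝ] g →ₗ[ℝ] g) (τ : g →ₗ[ℝ] g) (h : g) (W : Set g) : Set g :=
  W ∩ qEigen B τ h 1

/-- `C₋(W,τ,h) = (−W) ∩ q₋₁(h)`. -/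
def coneMinus {g : Type*} [NormedAddCommGroup g] [NormedSpace ℝ g] [FiniteDimensional ℝ g]
    (B : g →ₗ[ℝ] g →ₗ[ℝ] g) (τ : g →ₗ[ℝ] g) (h : g) (W : Set g) : Set g :=
  (-W) ∩ qEigen B τ h (-1)

/-- `g₊(W,τ,h)`, the linear span of `C₊(W,τ,h)`. -/
def gPlus {g : Type*} [NormedAddCommGroup g] [NormedSpace ℝ g] [FiniteDimensional ℝ g]
    (B : g →ₗ[ℝ] g →ₗ[ℝ] g) (τ : g →ₗ[ℝ] g) (h : g) (W : Set g) : Submodule ℝ g :=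
  Submodule.span ℝ (conePlus B τ h W)

/-- `g₋(W,τ,h)`, the linear span of `C₋(W,τ,h)`. -/
def gMinus {g : Type*} [NormedAddCommGroup g] [NormedSpace ℝ g] [FiniteDimensional ℝ g]
    (B : g →ₗ[ℝ] g →ₗ[ℝ] g) (τ : g →ₗ[ℝ] g) (h : g) (W : Set g) : Submodule ℝ g :=
  Submodule.span ℝ (coneMinus B τ h W)

/-- `h₀(h) = {x ∈ g^τ : ⁅h,x⁆ = 0}`. -/
def hZero {g : Type*} [NormedAddCommGroup g] [NormedSpace ℝ g] [FiniteDimensional ℝ g]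
    (B : g →ₗ[ℝ] g →ₗ[ℝ] g) (τ : g →ₗ[ℝ] g) (h : g) : Set g :=
  {x : g | τ x = x ∧ B h x = 0}

/-!
Let `x, y ∈ W` be `c`-eigenvectors of `ad h` with `c ≠ 0` and put `u = x + y`. Then `ad u` raises
`ad h`-eigenvalues by `c`, so it is nilpotent on `x`, and `exp (t ad u)` fixes `u`. Hence the curve
`t ↦ exp (t ad u) x` stays in `W ∩ (u - W)`, and every functional `μ ≥ 0` on `W` is a bounded
polynomial along it. Its linear coefficient `μ ⁅u, x⁆ = -μ ⁅x, y⁆` must vanish, so `±⁅x, y⁆ ∈ W`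
and pointedness gives `⁅x, y⁆ = 0`: the spans `g_±` are abelian.

For `z ∈ h₀(h)`, `exp (t ad z)` commutes with `τ` and `ad h` and preserves `W`, hence preserves
`C_±`; so `⁅z, w⁆` for `w ∈ C_±` is the derivative of a curve in `C_±` and lies in `g_±`.
The inclusion `⁅g₋, g₊⁆ ⊆ h₀(h)` is eigenvalue bookkeeping.
-/

open Polynomial
open scoped Nat

section Ladder

variable {K V : Type*} [Field K] [AddCommGroup V] [Module K V] {H U : Module.End K V} {a c : K}
  {z : V}

lemma Module.End.apply_pow_apply_eq_smul_of_commutator_eq_smul (hHU : H * U = U * H + c • U)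
    (hz : H z = a • z) (k : ℕ) : H ((U ^ k) z) = (a + k * c) • (U ^ k) z := by
  induction k with
  | zero => simpa using hz
  | succ k ih =>
    rw [pow_succ', Module.End.mul_apply, ← Module.End.mul_apply H, hHU, LinearMap.add_apply,
      Module.End.mul_apply, ih, LinearMap.smul_apply, map_smul, ← add_smul]
    push_cast
    ring_nf

lemma Module.End.exists_pow_apply_eq_zero_of_commutator_eq_smul [CharZero K]
    [FiniteDimensional K V] (hc : c ≠ 0) (hHU : H * U = U * H + c • U) (hz : H z = a • z) :
    ∃ m : ℕ, (U ^ m) z = 0 := by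
  by_contra! hne
  refine (Set.infinite_of_injective_forall_mem (f := fun k : ℕ => a + k * c) ?_ fun k => ?_)
    H.finite_hasEigenvalue
  · intro i j hij
    simpa [hc] using hij
  · exact Module.End.hasEigenvalue_of_hasEigenvector
      ⟨Module.End.mem_eigenspace_iff.2 (apply_pow_apply_eq_smul_of_commutator_eq_smul hHU hz k),
        hne k⟩

end Ladder

lemma Polynomial.coeff_eq_zero_of_forall_abs_eval_le {P : ℝ[X]} {C : ℝ}
    (hP : ∀ t, |P.eval t| ≤ C) {n : ℕ} (hn : n ≠ 0) : P.coeff n = 0 :=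
  coeff_eq_zero_of_degree_lt <| ((isBoundedUnder_abs_atTop_iff P).1
    ⟨C, Filter.eventually_map.2 (.of_forall hP)⟩).trans_lt (by exact_mod_cast Nat.pos_of_ne_zero hn)

section Exp

variable {E : Type*} [NormedAddCommGroup E] [NormedSpace ℝ E] (A : E →L[ℝ] E) {w : E} {m : ℕ}

lemma ContinuousLinearMap.pow_apply_eq_zero_of_le (hm : (A ^ m) w = 0) {k : ℕ} (hk : m ≤ k) :
    (A ^ k) w = 0 := by
  rw [← Nat.sub_add_cancel hk, pow_add, mul_apply_eq_comp, hm, map_zero]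

lemma apply_exp_smul_apply_of_commute {T : E →L[ℝ] E} (hAT : Commute A T) (t : ℝ) (u : E) :
    T (NormedSpace.exp (t • A) u) = NormedSpace.exp (t • A) (T u) :=
  congrArg (fun F : E →L[ℝ] E => F u) (hAT.smul_left t).exp_left.eq.symm

variable [CompleteSpace E]

lemma exp_smul_apply_eq_sum (hm : (A ^ m) w = 0) (t : ℝ) :
    NormedSpace.exp (t • A) w = ∑ k ∈ Finset.range m, (t ^ k / k !) • (A ^ k) w := by
  calc NormedSpace.exp (t • A) w
      = ∑' k : ℕ, ((k ! : ℝ)⁻¹ • (t • A) ^ k) w := by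
        rw [NormedSpace.exp_eq_tsum ℝ, ← ContinuousLinearMap.apply_apply (𝕜 := ℝ) w,
          ContinuousLinearMap.map_tsum _ (NormedSpace.expSeries_summable' (𝕂 := ℝ) (t • A))]
        rfl
    _ = ∑' k : ℕ, (t ^ k / k !) • (A ^ k) w := by
        simp only [_root_.smul_pow, FunLike.coe_smul, Pi.smul_apply, smul_smul, div_eq_inv_mul]
    _ = _ := tsum_eq_sum fun k hk => by
        rw [A.pow_apply_eq_zero_of_le hm (by simpa using hk), smul_zero]

lemma exists_polynomial_eval_eq_exp_smul_apply (hm : (A ^ m) w = 0) (μ : E →L[ℝ] ℝ) :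
    ∃ P : ℝ[X], (∀ t, P.eval t = μ (NormedSpace.exp (t • A) w)) ∧ P.coeff 1 = μ (A w) := by
  refine ⟨∑ k ∈ Finset.range (m + 2), monomial k (μ ((A ^ k) w) / k !), fun t => ?_, ?_⟩
  · simp only [eval_finsetSum, eval_monomial,
      exp_smul_apply_eq_sum A (A.pow_apply_eq_zero_of_le hm (m.le_add_right 2)), map_sum,
      map_smul, smul_eq_mul]
    exact Finset.sum_congr rfl fun k _ => by ring
  · simp [finsetSum_coeff, coeff_monomial]

lemma apply_eq_zero_of_forall_abs_exp_smul_apply_le (hm : (A ^ m) w = 0) (μ : E →L[ℝ] ℝ) {C : ℝ}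
    (hC : ∀ t : ℝ, |μ (NormedSpace.exp (t • A) w)| ≤ C) : μ (A w) = 0 := by
  obtain ⟨P, hPeval, hP1⟩ := exists_polynomial_eval_eq_exp_smul_apply A hm μ
  rw [← hP1]
  exact coeff_eq_zero_of_forall_abs_eval_le (fun t => (hPeval t).symm ▸ hC t) one_ne_zero

end Exp

lemma apply_mem_span_of_forall_exp_smul_apply_mem {E : Type*} [NormedAddCommGroup E]
    [NormedSpace ℝ E] [FiniteDimensional ℝ E] (A : E →L[ℝ] E) {S : Set E} {u : E}
    (hS : ∀ t : ℝ, NormedSpace.exp (t • A) u ∈ S) : A u ∈ Submodule.span ℝ S := by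
  have hder : HasDerivAt (fun t : ℝ => NormedSpace.exp (t • A) u) (A u) 0 := by
    simpa using (hasDerivAt_exp_smul_const (𝕂 := ℝ) A 0).clm_apply (hasDerivAt_const 0 u)
  refine (Submodule.span ℝ S).closed_of_finiteDimensional.mem_of_tendsto
    (hasDerivAt_iff_tendsto_slope.1 hder) (.of_forall fun t => ?_)
  rw [slope_def_module]
  exact Submodule.smul_mem _ _
    (Submodule.sub_mem _ (Submodule.subset_span (hS t)) (Submodule.subset_span (hS 0)))

section Cone

variable {E : Type*} [NormedAddCommGroup E] [NormedSpace ℝ E]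

def properConeOfConvex (W : Set E) (hclosed : IsClosed W) (hconv : Convex ℝ W)
    (hsmul : ∀ c : ℝ, 0 ≤ c → ∀ w ∈ W, c • w ∈ W) (h0 : (0 : E) ∈ W) : ProperCone ℝ E where
  carrier := W
  add_mem' {x y} hx hy := by
    have hmid := hconv hx hy (a := 1 / 2) (b := 1 / 2) (by norm_num) (by norm_num) (by norm_num)
    simpa [← smul_add, smul_smul] using hsmul 2 (by norm_num) _ hmid
  zero_mem' := h0
  smul_mem' c _ hx := hsmul c c.2 _ hx
  isClosed' := hclosed

lemma eq_zero_of_forall_dual_apply_eq_zero {W : Set E} (hclosed : IsClosed W)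
    (hconv : Convex ℝ W) (hsmul : ∀ c : ℝ, 0 ≤ c → ∀ w ∈ W, c • w ∈ W)
    (hpointed : W ∩ -W = {0}) {z : E}
    (hz : ∀ f : StrongDual ℝ E, (∀ w ∈ W, 0 ≤ f w) → f z = 0) : z = 0 := by
  have h0 : (0 : E) ∈ W := (hpointed.symm ▸ rfl : (0 : E) ∈ W ∩ -W).1
  have hmem : ∀ v : E, (∀ f : StrongDual ℝ E, (∀ w ∈ W, 0 ≤ f w) → 0 ≤ f v) → v ∈ W := by
    intro v hv
    by_contra hvW
    obtain ⟨f, hfW, hfv⟩ :=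
      (properConeOfConvex W hclosed hconv hsmul h0).hyperplane_separation_point hvW
    exact (hv f hfW).not_gt hfv
  have hz' : z ∈ W ∩ -W :=
    ⟨hmem z fun f hf => (hz f hf).ge, hmem (-z) fun f hf => by simp [hz f hf]⟩
  simpa [hpointed] using hz'

end Cone

lemma LinearMap.apply_mem_of_mem_span {R M N P : Type*} [CommSemiring R] [AddCommMonoid M]
    [AddCommMonoid N] [AddCommMonoid P] [Module R M] [Module R N] [Module R P]
    (f : M →ₗ[R] N →ₗ[R] P) {s : Set M} {t : Set N} {p : Submodule R P}
    (h : ∀ x ∈ s, ∀ y ∈ t, f x y ∈ p) {x : M} {y : N} (hx : x ∈ Submodule.span R s)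
    (hy : y ∈ Submodule.span R t) : f x y ∈ p := by
  refine Submodule.map₂_le.1 ?_ x hx y hy
  rw [Submodule.map₂_span_span, Submodule.span_le]
  rintro _ ⟨a, ha, b, hb, rfl⟩
  exact h a ha b hb

lemma LinearMap.toContinuousLinearMap_pow_apply {E : Type*} [NormedAddCommGroup E]
    [NormedSpace ℝ E] [FiniteDimensional ℝ E] (f : Module.End ℝ E) (k : ℕ) (x : E) :
    (LinearMap.toContinuousLinearMap f ^ k) x = (f ^ k) x :=
  congrArg (fun F : E →L[ℝ] E => F x) (map_pow (Module.End.toContinuousLinearMap E) f k).symm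

section LieBracket

variable {g : Type*} [AddCommGroup g] [Module ℝ g] {B : g →ₗ[ℝ] g →ₗ[ℝ] g}

lemma IsLieBracketOn.apply_swap (hB : IsLieBracketOn B) (x y : g) : B y x = -B x y := by
  have h := hB.1 (x + y)
  simp only [map_add, LinearMap.add_apply, hB.1, zero_add, add_zero] at h
  exact eq_neg_of_add_eq_zero_left h

lemma IsLieBracketOn.commutator_eq_smul_of_apply_eq_smul (hB : IsLieBracketOn B) {h u : g} {c : ℝ}
    (hu : B h u = c • u) : B h * B u = B u * B h + c • B u :=
  LinearMap.ext fun w => by simp [hB.2 h u w, hu, add_comm]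

end LieBracket

section InvariantCone

variable {g : Type*} [NormedAddCommGroup g] [NormedSpace ℝ g] [FiniteDimensional ℝ g]
  {B : g →ₗ[ℝ] g →ₗ[ℝ] g} {W : Set g}

lemma IsInvariantCone.exp_smul_mem (hW : IsInvariantCone B W) (x : g) (t : ℝ) {w : g}
    (hw : w ∈ W) : NormedSpace.exp (t • LinearMap.toContinuousLinearMap (B x)) w ∈ W := by
  simpa [map_smul] using hW.2.2.2 (t • x) w hw

lemma IsInvariantCone.neg (hW : IsInvariantCone B W) : IsInvariantCone B (-W) := by
  obtain ⟨hclosed, hconv, hsmul, hexp⟩ := hW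
  refine ⟨hclosed.neg, hconv.neg, fun c hc w hw => ?_, fun x w hw => ?_⟩
  · simpa [smul_neg] using hsmul c hc _ hw
  · simpa [map_neg] using hexp x _ hw

lemma IsLieBracketOn.apply_eq_zero_of_mem_of_apply_eq_smul (hB : IsLieBracketOn B)
    (hW : IsInvariantCone B W) (hpointed : W ∩ -W = {0}) {h x y : g} {c : ℝ} (hc : c ≠ 0)
    (hx : x ∈ W) (hy : y ∈ W) (hhx : B h x = c • x) (hhy : B h y = c • y) : B x y = 0 := by
  set u := x + y
  set A := LinearMap.toContinuousLinearMap (B u)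
  have hhu : B h u = c • u := by rw [map_add, hhx, hhy, smul_add]
  obtain ⟨m, hm⟩ := Module.End.exists_pow_apply_eq_zero_of_commutator_eq_smul hc
    (hB.commutator_eq_smul_of_apply_eq_smul hhu) hhx
  have hAx : (A ^ m) x = 0 := by rwa [LinearMap.toContinuousLinearMap_pow_apply]
  have hAu : (A ^ 1) u = 0 := by simpa [A] using hB.1 u
  have hexp_add : ∀ t : ℝ, NormedSpace.exp (t • A) x + NormedSpace.exp (t • A) y = u := by
    intro t
    rw [← map_add, exp_smul_apply_eq_sum A hAu]
    simp
  refine eq_zero_of_forall_dual_apply_eq_zero hW.1 hW.2.1 hW.2.2.1 hpointed fun μ hμ => ?_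
  have hbound : ∀ t : ℝ, |μ (NormedSpace.exp (t • A) x)| ≤ μ u := by
    intro t
    have hxt := hμ _ (hW.exp_smul_mem u t hx)
    have hyt := hμ _ (hW.exp_smul_mem u t hy)
    have hsum := congrArg μ (hexp_add t)
    rw [map_add] at hsum
    rw [abs_le]
    constructor <;> linarith
  have hAx' : A x = -B x y := by
    simp [A, u, hB.1, hB.apply_swap x y]
  simpa [hAx'] using apply_eq_zero_of_forall_abs_exp_smul_apply_le A hAx μ hbound

end InvariantCone

section Involution

variable {g : Type*} [NormedAddCommGroup g] [NormedSpace ℝ g] [FiniteDimensional ℝ g]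
  {B : g →ₗ[ℝ] g →ₗ[ℝ] g} {τ : g →ₗ[ℝ] g} {h : g} {W : Set g} {ε : ℝ}

lemma IsLieBracketOn.apply_mem_hZero_of_mem_qEigen (hB : IsLieBracketOn B)
    (hτbr : ∀ x y : g, τ (B x y) = B (τ x) (τ y)) {x y : g} (hx : x ∈ qEigen B τ h (-ε))
    (hy : y ∈ qEigen B τ h ε) : B x y ∈ hZero B τ h := by
  refine ⟨by simp [hτbr, hx.1, hy.1], ?_⟩
  rw [hB.2 h x y, hx.2, hy.2]
  simp

lemma IsLieBracketOn.apply_mem_hZero_of_mem_span_qEigen (hB : IsLieBracketOn B)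
    (hτbr : ∀ x y : g, τ (B x y) = B (τ x) (τ y)) {u v : g}
    (hu : u ∈ Submodule.span ℝ (qEigen B τ h (-ε)))
    (hv : v ∈ Submodule.span ℝ (qEigen B τ h ε)) : B u v ∈ hZero B τ h :=
  B.apply_mem_of_mem_span (p := LinearMap.eqLocus τ LinearMap.id ⊓ LinearMap.ker (B h))
    (fun _ hx _ hy => hB.apply_mem_hZero_of_mem_qEigen hτbr hx hy) hu hv

lemma IsLieBracketOn.exp_smul_apply_mem_inter_qEigen (hB : IsLieBracketOn B)
    (hτbr : ∀ x y : g, τ (B x y) = B (τ x) (τ y)) (hW : IsInvariantCone B W) {z u : g}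
    (hz : z ∈ hZero B τ h) (hu : u ∈ W ∩ qEigen B τ h ε) (t : ℝ) :
    NormedSpace.exp (t • LinearMap.toContinuousLinearMap (B z)) u ∈ W ∩ qEigen B τ h ε := by
  set A := LinearMap.toContinuousLinearMap (B z)
  have hτA : Commute A (LinearMap.toContinuousLinearMap τ) :=
    ContinuousLinearMap.ext fun w => by simp [A, hτbr, hz.1]
  have hhA : Commute A (LinearMap.toContinuousLinearMap (B h)) :=
    ContinuousLinearMap.ext fun w => by simp [A, hB.2 h z w, hz.2]
  refine ⟨hW.exp_smul_mem z t hu.1, ?_, ?_⟩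
  · simpa [hu.2.1] using apply_exp_smul_apply_of_commute A hτA t u
  · simpa [hu.2.2] using apply_exp_smul_apply_of_commute A hhA t u

lemma IsLieBracketOn.apply_mem_span_inter_qEigen (hB : IsLieBracketOn B)
    (hτbr : ∀ x y : g, τ (B x y) = B (τ x) (τ y)) (hW : IsInvariantCone B W) {z u : g}
    (hz : z ∈ hZero B τ h) (hu : u ∈ Submodule.span ℝ (W ∩ qEigen B τ h ε)) :
    B z u ∈ Submodule.span ℝ (W ∩ qEigen B τ h ε) :=
  B.apply_mem_of_mem_span (s := {z})
    (fun _ hx _ hy => Set.mem_singleton_iff.1 hx ▸ apply_mem_span_of_forall_exp_smul_apply_mem _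
      (hB.exp_smul_apply_mem_inter_qEigen hτbr hW hz hy))
    (Submodule.mem_span_singleton_self z) hu

lemma IsLieBracketOn.apply_eq_zero_of_mem_span_inter_qEigen (hB : IsLieBracketOn B)
    (hW : IsInvariantCone B W) (hpointed : W ∩ -W = {0}) (hε : ε ≠ 0) {u v : g}
    (hu : u ∈ Submodule.span ℝ (W ∩ qEigen B τ h ε))
    (hv : v ∈ Submodule.span ℝ (W ∩ qEigen B τ h ε)) : B u v = 0 :=
  (Submodule.mem_bot ℝ).1 <| B.apply_mem_of_mem_span (fun _ hx _ hy =>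
    (Submodule.mem_bot ℝ).2 <|
      hB.apply_eq_zero_of_mem_of_apply_eq_smul hW hpointed hε hx.1 hy.1 hx.2.2 hy.2.2) hu hv

end Involution

theorem gRed_three_graded_general
    {g : Type*} [NormedAddCommGroup g] [NormedSpace ℝ g] [FiniteDimensional ℝ g]
    (B : g →ₗ[ℝ] g →ₗ[ℝ] g) (hB : IsLieBracketOn B)
    (τ : g →ₗ[ℝ] g) (hτbr : ∀ x y : g, τ (B x y) = B (τ x) (τ y))
    (h : g)
    (W : Set g) (hW : IsInvariantCone B W)
    (hpointed : W ∩ (-W) = {0}) :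
    (∀ u ∈ gPlus B τ h W, ∀ v ∈ gPlus B τ h W, B u v = 0) ∧
    (∀ u ∈ gMinus B τ h W, ∀ v ∈ gMinus B τ h W, B u v = 0) ∧
    (∀ u ∈ gMinus B τ h W, ∀ v ∈ gPlus B τ h W, B u v ∈ hZero B τ h) ∧
    (∀ z ∈ hZero B τ h, ∀ u ∈ gPlus B τ h W, B z u ∈ gPlus B τ h W) ∧
    (∀ z ∈ hZero B τ h, ∀ u ∈ gMinus B τ h W, B z u ∈ gMinus B τ h W) := by
  have hpointed_neg : -W ∩ -(-W) = {0} := by rwa [neg_neg, Set.inter_comm]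
  refine ⟨fun u hu v hv => hB.apply_eq_zero_of_mem_span_inter_qEigen hW hpointed one_ne_zero hu hv,
    fun u hu v hv =>
      hB.apply_eq_zero_of_mem_span_inter_qEigen hW.neg hpointed_neg (by norm_num) hu hv,
    fun u hu v hv => hB.apply_mem_hZero_of_mem_span_qEigen hτbr
      (Submodule.span_mono Set.inter_subset_right hu)
      (Submodule.span_mono Set.inter_subset_right hv),
    fun z hz u hu => hB.apply_mem_span_inter_qEigen hτbr hW hz hu,
    fun z hz u hu => hB.apply_mem_span_inter_qEigen hτbr hW.neg hz hu⟩

/-- Lemma 3.1: `g_red(W,τ,h) = g₋ ⊕ h₀(h) ⊕ g₊` is a 3-graded Lie subalgebra: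
`g₊` and `g₋` are abelian, `⁅g₋, g₊⁆ ⊆ h₀(h)`, and `⁅h₀(h), g_±⁆ ⊆ g_±`. -/
theorem gRed_three_graded
    {g : Type*} [NormedAddCommGroup g] [NormedSpace ℝ g] [FiniteDimensional ℝ g]
    (B : g →ₗ[ℝ] g →ₗ[ℝ] g) (hB : IsLieBracketOn B)
    (τ : g →ₗ[ℝ] g) (hτbr : ∀ x y : g, τ (B x y) = B (τ x) (τ y))
    (hτinv : ∀ x, τ (τ x) = x)
    (h : g) (hh : τ h = h)
    (W : Set g) (hW : IsInvariantCone B W)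
    (hpointed : W ∩ (-W) = {0}) (hgen : Submodule.span ℝ W = ⊤) :
    (∀ u ∈ gPlus B τ h W, ∀ v ∈ gPlus B τ h W, B u v = 0) ∧
    (∀ u ∈ gMinus B τ h W, ∀ v ∈ gMinus B τ h W, B u v = 0) ∧
    (∀ u ∈ gMinus B τ h W, ∀ v ∈ gPlus B τ h W, B u v ∈ hZero B τ h) ∧
    (∀ z ∈ hZero B τ h, ∀ u ∈ gPlus B τ h W, B z u ∈ gPlus B τ h W) ∧
    (∀ z ∈ hZero B τ h, ∀ u ∈ gMinus B τ h W, B z u ∈ gMinus B τ h W) :=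
  gRed_three_graded_general B hB τ hτbr h W hW hpointed
end

section
/- Let g be a finite-dimensional real Lie algebra and let h, x, y ∈ g be an sl(2)-triple, i.e. ⁅h,x⁆ = 2x, ⁅h,y⁆ = −2y, ⁅x,y⁆ = h. Assume that g is the internal direct sum of the eigenspaces g_{−2}(h), g_0(h), g_2(h) of ad h for the eigenvalues −2, 0, 2. Define on V := g_2(h) the product a ∘ b := (1/2)⁅⁅a, y⁆, b⁆. Then: (i) a ∘ b ∈ V for all a, b ∈ V; (ii) the product is commutative: a ∘ b = b ∘ a; (iii) x is a unit: x ∘ b = b for all b ∈ V; and (iv) the Jordan identity holds: a ∘ ((a ∘ a) ∘ b) = (a ∘ a) ∘ (a ∘ b) for all a, b ∈ V. In other words, (V, ∘) is a unital Jordan algebra. -/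
/-- The Kantor–Koecher–Tits product `a ∘ b = (1/2)⁅⁅a, y⁆, b⁆` on `g₂(h)`. -/
noncomputable def kktProd {g : Type*} [LieRing g] [LieAlgebra ℝ g] (y a b : g) : g :=
  (2⁻¹ : ℝ) • ⁅⁅a, y⁆, b⁆

/-- Example 2.20(a) (Kantor–Koecher–Tits construction): for an `sl(2)`-triple `(h,x,y)`
such that `g = g₋₂(h) ⊕ g₀(h) ⊕ g₂(h)`, the space `V = g₂(h)` with product
`a ∘ b = (1/2)⁅⁅a,y⁆,b⁆` is a unital commutative Jordan algebra with unit `x`. -/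
theorem kkt_jordan_algebra
    {g : Type*} [LieRing g] [LieAlgebra ℝ g] [Module.Finite ℝ g]
    (h x y : g)
    (hhx : ⁅h, x⁆ = (2 : ℝ) • x) (hhy : ⁅h, y⁆ = (-2 : ℝ) • y) (hxy : ⁅x, y⁆ = h)
    (gm2 g0 V : Submodule ℝ g)
    (hmem2 : ∀ z, z ∈ gm2 ↔ ⁅h, z⁆ = (-2 : ℝ) • z)
    (hmem0 : ∀ z, z ∈ g0 ↔ ⁅h, z⁆ = 0)
    (hmemV : ∀ z, z ∈ V ↔ ⁅h, z⁆ = (2 : ℝ) • z)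
    (hsup : gm2 ⊔ g0 ⊔ V = ⊤)
    (hind : ∀ a ∈ gm2, ∀ b ∈ g0, ∀ c ∈ V, a + b + c = 0 → a = 0 ∧ b = 0 ∧ c = 0) :
    (∀ a ∈ V, ∀ b ∈ V, kktProd y a b ∈ V) ∧
    (∀ a ∈ V, ∀ b ∈ V, kktProd y a b = kktProd y b a) ∧
    (x ∈ V ∧ ∀ b ∈ V, kktProd y x b = b) ∧
    (∀ a ∈ V, ∀ b ∈ V,
      kktProd y a (kktProd y (kktProd y a a) b) =
        kktProd y (kktProd y a a) (kktProd y a b)) := by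
  -- Any `ad h`-eigenvector for an eigenvalue other than -2, 0, 2 vanishes.
  have hkill : ∀ t : ℝ, t ≠ -2 → t ≠ 0 → t ≠ 2 → ∀ z : g, ⁅h, z⁆ = t • z → z = 0 := by
    intro t h1 h2 h3 z hz
    have hzmem : z ∈ gm2 ⊔ g0 ⊔ V := by rw [hsup]; exact Submodule.mem_top
    obtain ⟨p, hp, w, hw, rfl⟩ := Submodule.mem_sup.mp hzmem
    obtain ⟨u, hu, v, hv, rfl⟩ := Submodule.mem_sup.mp hp
    have eu := (hmem2 u).mp hu
    have ev := (hmem0 v).mp hv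
    have ew := (hmemV w).mp hw
    have hz2 : (-2 : ℝ) • u + (2 : ℝ) • w = t • (u + v + w) := by
      rw [← hz, lie_add, lie_add, eu, ev, ew]; abel
    have key : ((-2 - t) • u) + ((-t) • v) + ((2 - t) • w) = 0 := by
      rw [show ((-2 - t) • u) + ((-t) • v) + ((2 - t) • w)
            = ((-2 : ℝ) • u + (2 : ℝ) • w) - t • (u + v + w) from by module, hz2, sub_self]
    obtain ⟨e1, e2, e3⟩ := hind _ (gm2.smul_mem _ hu) _ (g0.smul_mem _ hv) _
      (V.smul_mem _ hw) key
    have hu0 : u = 0 := by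
      have hne : (-2 - t) ≠ 0 := fun e => h1 (by linarith)
      exact (smul_eq_zero.mp e1).resolve_left hne
    have hv0 : v = 0 := by
      have hne : (-t) ≠ 0 := fun e => h2 (by linarith)
      exact (smul_eq_zero.mp e2).resolve_left hne
    have hw0 : w = 0 := by
      have hne : (2 - t) ≠ 0 := fun e => h3 (by linarith)
      exact (smul_eq_zero.mp e3).resolve_left hne
    rw [hu0, hv0, hw0]; abel
  have eigV : ∀ {v : g}, v ∈ V → ⁅h, v⁆ = (2 : ℝ) • v := fun hv => (hmemV _).mp hv
  -- `⁅u,y⁆` has eigenvalue 0 for `u ∈ V`.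
  have eig0 : ∀ {u : g}, u ∈ V → ⁅h, ⁅u, y⁆⁆ = 0 := by
    intro u hu
    rw [leibniz_lie, eigV hu, hhy, smul_lie, lie_smul]
    module
  -- `⁅V, V⁆ = 0` (eigenvalue 4).
  have hVV : ∀ {u v : g}, u ∈ V → v ∈ V → ⁅u, v⁆ = 0 := by
    intro u v hu hv
    refine hkill 4 (by norm_num) (by norm_num) (by norm_num) _ ?_
    rw [leibniz_lie, eigV hu, eigV hv, smul_lie, lie_smul]
    module
  -- (i) the product stays in V
  have prodV : ∀ {u v : g}, u ∈ V → v ∈ V → kktProd y u v ∈ V := by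
    intro u v hu hv
    rw [hmemV]
    show ⁅h, (2⁻¹ : ℝ) • ⁅⁅u, y⁆, v⁆⁆ = (2 : ℝ) • (2⁻¹ : ℝ) • ⁅⁅u, y⁆, v⁆
    rw [lie_smul, leibniz_lie, eig0 hu, eigV hv, zero_lie, zero_add, lie_smul]
    module
  -- (ii) commutativity on the level of double brackets
  have comm : ∀ {u v : g}, u ∈ V → v ∈ V → ⁅⁅u, y⁆, v⁆ = ⁅⁅v, y⁆, u⁆ := by
    intro u v hu hv
    rw [lie_lie, hVV hu hv, lie_zero, sub_zero, ← lie_skew y v, lie_neg]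
    exact lie_skew _ _
  -- pure Jacobi identity used twice below
  have jac : ∀ u w : g, ⁅⁅⁅u, y⁆, y⁆, w⁆ = ⁅⁅⁅u, y⁆, w⁆, y⁆ - ⁅⁅u, y⁆, ⁅w, y⁆⁆ := by
    intro u w
    rw [lie_lie, ← lie_skew y w, ← lie_skew y ⁅⁅u, y⁆, w⁆, lie_neg, sub_neg_eq_add]
    abel
  refine ⟨fun a ha b hb => prodV ha hb, ?_, ⟨(hmemV x).mpr hhx, ?_⟩, ?_⟩
  · -- (ii)
    intro a ha b hb
    simp only [kktProd]
    rw [comm ha hb]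
  · -- (iii)
    intro b hb
    simp only [kktProd]
    rw [hxy, eigV hb, smul_smul]
    norm_num
  · -- (iv) the Jordan identity
    intro a ha b hb
    set c := kktProd y a a with hcdef
    have hcV : c ∈ V := prodV ha ha
    have hc2 : ⁅⁅a, y⁆, a⁆ = (2 : ℝ) • c := by
      rw [hcdef]
      simp only [kktProd]
      rw [smul_smul]
      norm_num
    -- S1 : 2⁅c,y⁆ = -⁅a, E⁆  with  E = ⁅⁅a,y⁆,y⁆
    have S1 : (2 : ℝ) • ⁅c, y⁆ = -⁅a, ⁅⁅a, y⁆, y⁆⁆ := by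
      rw [← smul_lie, ← hc2, lie_lie, lie_self, zero_sub]
    -- S0 : ⁅E, y⁆ = 0  (eigenvalue -4)
    have eigE : ⁅h, ⁅⁅a, y⁆, y⁆⁆ = (-2 : ℝ) • ⁅⁅a, y⁆, y⁆ := by
      rw [leibniz_lie, eig0 ha, zero_lie, zero_add, hhy, lie_smul]
    have S0 : ⁅⁅⁅a, y⁆, y⁆, y⁆ = 0 := by
      refine hkill (-4) (by norm_num) (by norm_num) (by norm_num) _ ?_
      rw [leibniz_lie, eigE, hhy, smul_lie, lie_smul]
      module
    -- S2 : 2⁅⁅c,y⁆,y⁆ = ⁅E, ⁅a,y⁆⁆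
    have S2 : (2 : ℝ) • ⁅⁅c, y⁆, y⁆ = ⁅⁅⁅a, y⁆, y⁆, ⁅a, y⁆⁆ := by
      rw [← smul_lie, S1, neg_lie, lie_lie, S0, lie_zero, zero_sub, neg_neg]
    -- main computation: 2M = -2⁅c,E⁆ + 2⁅a,Ec⁆
    have e5 : (2 : ℝ) • ⁅⁅a, y⁆, ⁅c, y⁆⁆
        = (-2 : ℝ) • ⁅c, ⁅⁅a, y⁆, y⁆⁆ + (2 : ℝ) • ⁅a, ⁅⁅c, y⁆, y⁆⁆ := by
      rw [← lie_smul, S1, lie_neg, leibniz_lie, hc2,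
        ← lie_skew ⁅a, y⁆ ⁅⁅a, y⁆, y⁆, ← S2, smul_lie, lie_neg, lie_smul]
      module
    have e6 : ⁅⁅⁅a, y⁆, y⁆, c⁆ = ⁅⁅⁅c, y⁆, a⁆, y⁆ - ⁅⁅a, y⁆, ⁅c, y⁆⁆ := by
      rw [jac a c, comm ha hcV]
    have e7 : ⁅⁅⁅c, y⁆, y⁆, a⁆ = ⁅⁅⁅c, y⁆, a⁆, y⁆ + ⁅⁅a, y⁆, ⁅c, y⁆⁆ := by
      rw [jac c a, ← lie_skew ⁅c, y⁆ ⁅a, y⁆, sub_neg_eq_add]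
    have final : (2 : ℝ) • ⁅⁅a, y⁆, ⁅c, y⁆⁆ = -((4 : ℝ) • ⁅⁅a, y⁆, ⁅c, y⁆⁆) := by
      rw [e5, show ⁅c, ⁅⁅a, y⁆, y⁆⁆ = -⁅⁅⁅a, y⁆, y⁆, c⁆ from by
          rw [← lie_skew ⁅⁅a, y⁆, y⁆ c, neg_neg],
        show ⁅a, ⁅⁅c, y⁆, y⁆⁆ = -⁅⁅⁅c, y⁆, y⁆, a⁆ from by
          rw [← lie_skew ⁅⁅c, y⁆, y⁆ a, neg_neg], e6, e7]
      module
    have h6 : (6 : ℝ) • ⁅⁅a, y⁆, ⁅c, y⁆⁆ = 0 := by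
      rw [show (6 : ℝ) • ⁅⁅a, y⁆, ⁅c, y⁆⁆
            = (2 : ℝ) • ⁅⁅a, y⁆, ⁅c, y⁆⁆ + (4 : ℝ) • ⁅⁅a, y⁆, ⁅c, y⁆⁆ from by module, final]
      module
    have Mzero : ⁅⁅a, y⁆, ⁅c, y⁆⁆ = 0 :=
      (smul_eq_zero.mp h6).resolve_left (by norm_num)
    have key' : ⁅⁅a, y⁆, ⁅⁅c, y⁆, b⁆⁆ = ⁅⁅c, y⁆, ⁅⁅a, y⁆, b⁆⁆ := by
      rw [leibniz_lie, Mzero, zero_lie, zero_add]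
    simp only [kktProd]
    rw [lie_smul, lie_smul, key']
end

section
/- Let V be a finite-dimensional real vector space equipped with a commutative bilinear product ∘ satisfying the Jordan identity a ∘ ((a ∘ a) ∘ b) = (a ∘ a) ∘ (a ∘ b) for all a, b ∈ V, and with a positive-definite inner product ⟪·,·⟫ that is associative: ⟪a ∘ b, c⟫ = ⟪b, a ∘ c⟫ for all a, b, c ∈ V. Let c ∈ V be an idempotent (c ∘ c = c) and let x ∈ V satisfy ⟪x ∘ x, c⟫ = 0. Then c ∘ x = 0 and c ∘ (x ∘ x) = 0. -/
open RealInnerProductSpace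

/-- Lemma 2.31 (coordinate-free form): in a euclidean Jordan algebra, if `c` is an
idempotent and `⟪x ∘ x, c⟫ = 0`, then `c ∘ x = 0` and `c ∘ (x ∘ x) = 0`. -/
theorem jordan_square_orthogonal_idempotent
    {V : Type*} [NormedAddCommGroup V] [InnerProductSpace ℝ V] [FiniteDimensional ℝ V]
    (mul : V →ₗ[ℝ] V →ₗ[ℝ] V)
    (hcomm : ∀ a b : V, mul a b = mul b a)
    (hjordan : ∀ a b : V, mul a (mul (mul a a) b) = mul (mul a a) (mul a b))
    (hassoc : ∀ a b c : V, ⟪mul a b, c⟫ = ⟪b, mul a c⟫)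
    (c : V) (hc : mul c c = c)
    (x : V) (hx : ⟪mul x x, c⟫ = 0) :
    mul c x = 0 ∧ mul c (mul x x) = 0 := by
  have lin : ∀ z b : V, mul z (mul c b) + (2:ℝ) • mul c (mul (mul c z) b)
      = (2:ℝ) • mul (mul c z) (mul c b) + mul c (mul z b) := by
    intro z b
    have h1 := hjordan (c + z) b
    have h2 := hjordan (c - z) b
    have h3 := hjordan z b
    simp only [map_add, map_sub, LinearMap.add_apply, LinearMap.sub_apply, hc,
      hcomm z c] at h1 h2
    linear_combination (norm := module) ((1/2:ℝ)) • h1 - ((1/2:ℝ)) • h2 - h3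
  have cubic : ∀ z : V, (2:ℝ) • mul c (mul c (mul c z)) = (3:ℝ) • mul c (mul c z) - mul c z := by
    intro z
    have h := lin z c
    rw [hc, hcomm z c, hcomm (mul c z) c] at h
    linear_combination (norm := module) h
  -- abbreviations
  set a := mul c x with ha
  set b := mul c a with hb
  set d := mul c b with hd
  set e := mul c d with he
  -- scalar facts
  have s1 : ⟪a, x⟫ = 0 := by
    rw [ha, real_inner_comm, ← hcomm x c, ← hassoc x x c]
    exact hx
  have r1 : (2:ℝ) * ⟪d, x⟫ = 3 * ⟪b, x⟫ - ⟪a, x⟫ := by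
    have h := congrArg (fun v => ⟪v, x⟫) (cubic x)
    simpa [real_inner_smul_left, inner_sub_left] using h
  have r2 : (2:ℝ) * ⟪e, x⟫ = 3 * ⟪d, x⟫ - ⟪b, x⟫ := by
    have h := congrArg (fun v => ⟪v, x⟫) (cubic a)
    simpa [real_inner_smul_left, inner_sub_left, ← hb, ← hd, ← he] using h
  have saa : ⟪a, a⟫ = ⟪b, x⟫ := by
    rw [ha, hassoc c x a, real_inner_comm x, hb]
  have sab : ⟪a, b⟫ = ⟪d, x⟫ := by
    rw [ha, hassoc c x b, real_inner_comm x, hd]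
  have sbb : ⟪b, b⟫ = ⟪e, x⟫ := by
    rw [hb, hassoc c a b, ← hd, ha, hassoc c x d, ← he, real_inner_comm]
  -- two nonnegative quantities forcing ⟪b,x⟫ = 0
  have n1 : ⟪(2:ℝ) • b - a, (2:ℝ) • b - a⟫ = 2 * ⟪b, x⟫ := by
    simp only [inner_sub_left, inner_sub_right, real_inner_smul_left, real_inner_smul_right]
    linarith [r1, r2, saa, sab, sbb, s1, real_inner_comm a b]
  have n2 : ⟪a - b, a - b⟫ = -(⟪b, x⟫ / 4) := by
    simp only [inner_sub_left, inner_sub_right]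
    linarith [r1, r2, saa, sab, sbb, s1, real_inner_comm a b]
  have hbx : ⟪b, x⟫ = 0 := by
    have p1 : (0:ℝ) ≤ ⟪(2:ℝ) • b - a, (2:ℝ) • b - a⟫ := real_inner_self_nonneg
    have p2 : (0:ℝ) ≤ ⟪a - b, a - b⟫ := real_inner_self_nonneg
    rw [n1] at p1; rw [n2] at p2; linarith
  have e1 : (2:ℝ) • b - a = 0 := by
    rw [← inner_self_eq_zero (𝕜 := ℝ), n1, hbx]; ring
  have e2 : a - b = 0 := by
    rw [← inner_self_eq_zero (𝕜 := ℝ), n2, hbx]; ring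
  have hax : a = 0 := by
    have : a = ((2:ℝ) • b - a) + (2:ℝ) • (a - b) := by module
    rw [this, e1, e2, smul_zero, add_zero]
  constructor
  · exact hax
  · have h := lin x x
    rw [← ha, hax] at h
    simpa using h.symm
end
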